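/- The class of languages accepted by quasi-deterministic all-final (qDF) sensing 5'→3' WK automata properly includes the class of languages accepted by quasi-deterministic all-final simple (qDFS) sensing 5'→3' WK automata: every qDFS automaton is a qDF automaton, and the language aaa(ab)*bbb = { aaa(ab)ⁿbbb : n ≥ 0 } is accepted by a qDF sensing 5'→3' WK automaton but by no qDFS sensing 5'→3' WK automaton. -/

import Mathlib

open Computability

/-- The two-letter alphabet `{a, b}`. -/
inductive Letter : Type
  | a : Letter
  | b : Letter
deriving DecidableEq

instance : Fintype Letter :=
  ⟨{Letter.a, Letter.b}, fun x => by cases x <;> simp⟩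

open Letter

/-- A sensing 5'→3' Watson-Crick automaton over the alphabet `T` with state set `Q`:
an initial state `q0`, a set `F` of final states, and a transition mapping
`δ : Q × T* × T* → 2^Q` that is nonempty for only finitely many triples. -/
structure WKAutomaton (T : Type) (Q : Type) where
  q0 : Q
  F : Set Q
  δ : Q → List T → List T → Set Q
  finite_delta : {t : Q × List T × List T | (δ t.1 t.2.1 t.2.2).Nonempty}.Finite

namespace WKAutomaton

variable {T Q : Type}

/-- One computation step on configurations:
`(q, x ++ w' ++ y) ⇒ (q', w')` iff `q' ∈ δ q x y`. -/
def Step (A : WKAutomaton T Q) (c c' : Q × List T) : Prop :=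
  ∃ x y : List T, c.2 = x ++ c'.2 ++ y ∧ c'.1 ∈ A.δ c.1 x y

/-- The accepted language: words `w` with `(q₀, w) ⇒* (q_F, λ)` for some final `q_F`. -/
def Lang (A : WKAutomaton T Q) : Set (List T) :=
  {w | ∃ qf ∈ A.F, Relation.ReflTransGen A.Step (A.q0, w) (qf, [])}

/-- `A` is deterministic: in every configuration at most one computation step
(choice of `x`, `y`, `w'`, `q'`) is applicable. -/
def Deterministic (A : WKAutomaton T Q) : Prop :=
  ∀ (q : Q) (w x₁ y₁ w₁ x₂ y₂ w₂ : List T) (q₁ q₂ : Q),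
    w = x₁ ++ w₁ ++ y₁ → q₁ ∈ A.δ q x₁ y₁ →
    w = x₂ ++ w₂ ++ y₂ → q₂ ∈ A.δ q x₂ y₂ →
    x₁ = x₂ ∧ y₁ = y₂ ∧ w₁ = w₂ ∧ q₁ = q₂

/-- `A` is quasi-deterministic: for every configuration `(q,w)`, whenever
`(q,w) ⇒ (p,u)` and `(q,w) ⇒ (r,v)`, it holds that `p = r`. -/
def QuasiDet (A : WKAutomaton T Q) : Prop :=
  ∀ (q : Q) (w : List T) (p r : Q) (u v : List T),
    A.Step (q, w) (p, u) → A.Step (q, w) (r, v) → p = r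

/-- `A` is state-deterministic: for every state `q` there is at most one state `p`
with `p ∈ δ(q,u,v)` for some words `u`, `v`. -/
def StateDet (A : WKAutomaton T Q) : Prop :=
  ∀ (q p₁ p₂ : Q) (u₁ v₁ u₂ v₂ : List T),
    p₁ ∈ A.δ q u₁ v₁ → p₂ ∈ A.δ q u₂ v₂ → p₁ = p₂

/-- `A` is stateless: `Q = F = {q₀}`. -/
def Stateless (A : WKAutomaton T Q) : Prop :=
  (∀ q : Q, q = A.q0) ∧ A.F = {A.q0}

/-- `A` is all-final: `Q = F`. -/
def AllFinal (A : WKAutomaton T Q) : Prop := A.F = Set.univ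

/-- `A` is simple: at most one head reads in each step. -/
def Simple (A : WKAutomaton T Q) : Prop :=
  ∀ (q : Q) (u v : List T), (A.δ q u v).Nonempty → u = [] ∨ v = []

/-- `A` is 1-limited: exactly one letter is read in each step. -/
def OneLimited (A : WKAutomaton T Q) : Prop :=
  ∀ (q : Q) (u v : List T), (A.δ q u v).Nonempty →
    (u = [] ∧ v.length = 1) ∨ (u.length = 1 ∧ v = [])

end WKAutomaton

/-- Equality of languages modulo the empty word. -/
def EqModLambda {T : Type} (L₁ L₂ : Set (List T)) : Prop :=
  ∀ w : List T, w ≠ [] → (w ∈ L₁ ↔ w ∈ L₂)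

/-- `L` is accepted (modulo the empty word) by some sensing 5'→3' WK automaton
with a finite state set satisfying the property `P`. -/
def AcceptsWith (T : Type) (P : ∀ Q : Type, WKAutomaton T Q → Prop)
    (L : Set (List T)) : Prop :=
  ∃ (Q : Type) (_ : Finite Q) (A : WKAutomaton T Q), P Q A ∧ EqModLambda A.Lang L

/-- The language `aaa(ab)*bbb = { aaa(ab)ⁿbbb : n ≥ 0 }`. -/
def Laaabbb : Set (List Letter) :=
  {w | ∃ n : ℕ, w = [a, a, a] ++ (List.replicate n [a, b]).flatten ++ [b, b, b]}

/-!
The automaton for `aaa(ab)*bbb` reads `aaa` and `bbb` with both heads in one step and then strips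
`ab` from the left. A simple all-final automaton cannot do this: in an accepting run, the first
step that reads anything reads a short prefix or suffix of the word with a single head, and since
every state is final, that prefix or suffix is accepted on its own. But no word of
`aaa(ab)*bbb` is a proper prefix or suffix of another, and the language has arbitrarily long words.
-/

open Relation

namespace WKAutomaton

variable {T Q : Type} (A : WKAutomaton T Q)

theorem exists_length_bound :
    ∃ m, ∀ q x y, (A.δ q x y).Nonempty → x.length + y.length ≤ m := by
  obtain ⟨m, hm⟩ := (A.finite_delta.image fun t => t.2.1.length + t.2.2.length).bddAbove
  exact ⟨m, fun q x y hne => hm ⟨(q, x, y), hne, rfl⟩⟩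

/-- The steps before the first one that reads a letter read nothing, so they can be replayed on
the word `x ++ y` read by that first step. -/
theorem exists_first_reading_step {q q' : Q} {w : List T}
    (h : ReflTransGen A.Step (q, w) (q', [])) (hw : w ≠ []) :
    ∃ x y mid q₁ q₂, q₂ ∈ A.δ q₁ x y ∧ w = x ++ mid ++ y ∧ x ++ y ≠ [] ∧
      ReflTransGen A.Step (q, x ++ y) (q₂, []) := by
  suffices ∀ c, ReflTransGen A.Step c (q', []) → c.2 ≠ [] →
      ∃ x y mid q₁ q₂, q₂ ∈ A.δ q₁ x y ∧ c.2 = x ++ mid ++ y ∧ x ++ y ≠ [] ∧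
        ReflTransGen A.Step (c.1, x ++ y) (q₂, []) from this _ h hw
  intro c h
  induction h using ReflTransGen.head_induction_on with
  | refl => exact fun hne => absurd rfl hne
  | @head c c' step _ ih =>
    intro hne
    obtain ⟨x, y, hc, hδ⟩ := step
    by_cases hxy : x ++ y = []
    · obtain ⟨rfl, rfl⟩ := List.append_eq_nil_iff.mp hxy
      have hc : c.2 = c'.2 := by simpa using hc
      obtain ⟨x', y', mid, q₁, q₂, hδ', hc', hxy', hrun⟩ := ih (hc ▸ hne)
      exact ⟨x', y', mid, q₁, q₂, hδ', hc.trans hc', hxy',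
        .head (show A.Step (c.1, x' ++ y') (c'.1, x' ++ y') from ⟨[], [], by simp, hδ⟩) hrun⟩
    · exact ⟨x, y, c'.2, c.1, c'.1, hδ, hc, hxy, .single ⟨x, y, by simp, hδ⟩⟩

theorem exists_short_affix_mem_lang (hF : A.AllFinal) (hS : A.Simple) :
    ∃ m, ∀ w ∈ A.Lang, w ≠ [] →
      ∃ u ∈ A.Lang, u ≠ [] ∧ u.length ≤ m ∧ (u <+: w ∨ u <:+ w) := by
  obtain ⟨m, hm⟩ := A.exists_length_bound
  refine ⟨m, fun w ⟨qf, _, hrun⟩ hw => ?_⟩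
  obtain ⟨x, y, mid, q₁, q₂, hδ, rfl, hxy, hrun'⟩ := A.exists_first_reading_step hrun hw
  refine ⟨x ++ y, ⟨q₂, hF ▸ trivial, hrun'⟩, hxy, by simpa using hm q₁ x y ⟨q₂, hδ⟩, ?_⟩
  rcases hS q₁ x y ⟨q₂, hδ⟩ with rfl | rfl
  · exact Or.inr ⟨mid, by simp⟩
  · exact Or.inl ⟨mid, by simp⟩

theorem not_eqModLambda_of_affixFree (hF : A.AllFinal) (hS : A.Simple) {L : Set (List T)}
    (hL : ∀ u ∈ L, ∀ w ∈ L, u <+: w ∨ u <:+ w → u = w)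
    (hlong : ∀ m, ∃ w ∈ L, m < w.length) : ¬ EqModLambda A.Lang L := by
  intro heq
  obtain ⟨m, hm⟩ := A.exists_short_affix_mem_lang hF hS
  obtain ⟨w, hwL, hlen⟩ := hlong m
  have hw : w ≠ [] := List.ne_nil_of_length_pos (by omega)
  obtain ⟨u, hu, hu0, hum, haffix⟩ := hm w ((heq w hw).2 hwL) hw
  rw [hL u ((heq u hu0).1 hu) w hwL haffix] at hum
  omega

end WKAutomaton

theorem eq_of_flatten_replicate_pair_append_prefix {T : Type*} {c d : T} (hcd : c ≠ d)
    {s t : List T} :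
    ∀ {k n : ℕ}, (List.replicate k [c, d]).flatten ++ d :: s <+:
      (List.replicate n [c, d]).flatten ++ d :: t → k = n
  | 0, 0, _ => rfl
  | 0, n + 1, h => by simp [List.replicate_succ, hcd.symm] at h
  | k + 1, 0, h => by simp [List.replicate_succ, hcd] at h
  | k + 1, n + 1, h => by
    simp only [List.replicate_succ, List.flatten_cons, List.cons_append, List.nil_append,
      List.cons_prefix_cons, true_and] at h
    rw [eq_of_flatten_replicate_pair_append_prefix hcd h]

theorem Laaabbb_eq_of_isPrefix {u w : List Letter} (hu : u ∈ Laaabbb) (hw : w ∈ Laaabbb)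
    (h : u <+: w) : u = w := by
  obtain ⟨k, rfl⟩ := hu
  obtain ⟨n, rfl⟩ := hw
  simp only [List.append_assoc, List.prefix_append_right_inj] at h
  rw [eq_of_flatten_replicate_pair_append_prefix (by decide) h]

theorem Laaabbb_eq_of_isSuffix {u w : List Letter} (hu : u ∈ Laaabbb) (hw : w ∈ Laaabbb)
    (h : u <:+ w) : u = w := by
  obtain ⟨k, rfl⟩ := hu
  obtain ⟨n, rfl⟩ := hw
  rw [← List.reverse_prefix] at h
  simp only [List.cons_append, List.nil_append, List.reverse_cons, List.reverse_append,
    List.reverse_nil, List.reverse_flatten, List.map_replicate, List.reverse_replicate,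
    List.append_assoc, List.cons_prefix_cons, true_and] at h
  rw [eq_of_flatten_replicate_pair_append_prefix (by decide) h]

theorem Laaabbb_exists_length_gt (m : ℕ) : ∃ w ∈ Laaabbb, m < w.length :=
  ⟨_, ⟨m, rfl⟩, by
    simp only [List.length_append, List.length_flatten, List.map_replicate, List.sum_replicate,
      List.length_cons, List.length_nil, smul_eq_mul]
    omega⟩

def aaabbbAutomaton : WKAutomaton Letter Bool where
  q0 := false
  F := Set.univ
  δ q x y := {p | p = true ∧ ((q = false ∧ x = [a, a, a] ∧ y = [b, b, b]) ∨
    (q = true ∧ x = [a, b] ∧ y = []))}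
  finite_delta := by
    refine ((Set.finite_singleton (true, [a, b], [])).insert
      (false, [a, a, a], [b, b, b])).subset ?_
    rintro ⟨q, x, y⟩ ⟨p, -, ⟨rfl, rfl, rfl⟩ | ⟨rfl, rfl, rfl⟩⟩ <;> simp

theorem aaabbbAutomaton_quasiDet : aaabbbAutomaton.QuasiDet := by
  rintro q w p r u v ⟨-, -, -, hp, -⟩ ⟨-, -, -, hr, -⟩
  exact hp.trans hr.symm

theorem aaabbbAutomaton_run_flatten_replicate (n : ℕ) :
    ReflTransGen aaabbbAutomaton.Step (true, (List.replicate n [a, b]).flatten) (true, []) := by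
  induction n with
  | zero => exact .refl
  | succ n ih =>
    exact .head ⟨[a, b], [], by simp [List.replicate_succ], rfl, .inr ⟨rfl, rfl, rfl⟩⟩ ih

theorem aaabbbAutomaton_word_of_run {c : Bool × List Letter} {q : Bool}
    (h : ReflTransGen aaabbbAutomaton.Step c (q, [])) :
    (c.1 = true → ∃ n, c.2 = (List.replicate n [a, b]).flatten) ∧
      (c.1 = false → c.2 = [] ∨ c.2 ∈ Laaabbb) := by
  induction h using ReflTransGen.head_induction_on with
  | refl => exact ⟨fun _ => ⟨0, rfl⟩, fun _ => .inl rfl⟩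
  | @head c c' step _ ih =>
    obtain ⟨x, y, hc, hc', ⟨hq, rfl, rfl⟩ | ⟨hq, rfl, rfl⟩⟩ := step
    · obtain ⟨n, hn⟩ := ih.1 hc'
      exact ⟨by simp [hq], fun _ => .inr ⟨n, by rw [hc, hn]⟩⟩
    · obtain ⟨n, hn⟩ := ih.1 hc'
      exact ⟨fun _ => ⟨n + 1, by simp [hc, hn, List.replicate_succ]⟩, by simp [hq]⟩

theorem aaabbbAutomaton_lang : EqModLambda aaabbbAutomaton.Lang Laaabbb := by
  intro w hw
  constructor
  · rintro ⟨q, -, hrun⟩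
    exact ((aaabbbAutomaton_word_of_run hrun).2 rfl).resolve_left hw
  · rintro ⟨n, rfl⟩
    exact ⟨true, trivial, .head ⟨[a, a, a], [b, b, b], rfl, rfl, .inl ⟨rfl, rfl, rfl⟩⟩
      (aaabbbAutomaton_run_flatten_replicate n)⟩

/-- The class of languages accepted by quasi-deterministic all-final (qDF) sensing
5'→3' WK automata properly includes the class of languages accepted by
quasi-deterministic all-final simple (qDFS) sensing 5'→3' WK automata: every
qDFS automaton is a qDF automaton, and `aaa(ab)*bbb` is accepted by a qDF
sensing 5'→3' WK automaton but by no qDFS sensing 5'→3' WK automaton. -/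
theorem qDFS_proper_subset_qDF :
    (∀ (T : Type) (L : Set (List T)),
      AcceptsWith T (fun _ A => A.QuasiDet ∧ A.AllFinal ∧ A.Simple) L →
      AcceptsWith T (fun _ A => A.QuasiDet ∧ A.AllFinal) L) ∧
    AcceptsWith Letter (fun _ A => A.QuasiDet ∧ A.AllFinal) Laaabbb ∧
    ¬ AcceptsWith Letter (fun _ A => A.QuasiDet ∧ A.AllFinal ∧ A.Simple) Laaabbb := by
  refine ⟨fun T L ⟨Q, hQ, A, ⟨hD, hF, _⟩, hL⟩ => ⟨Q, hQ, A, ⟨hD, hF⟩, hL⟩,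
    ⟨Bool, inferInstance, aaabbbAutomaton, ⟨aaabbbAutomaton_quasiDet, rfl⟩, aaabbbAutomaton_lang⟩,
    ?_⟩
  rintro ⟨Q, -, A, ⟨-, hF, hS⟩, hL⟩
  refine A.not_eqModLambda_of_affixFree hF hS ?_ Laaabbb_exists_length_gt hL
  rintro u hu w hw (h | h)
  exacts [Laaabbb_eq_of_isPrefix hu hw h, Laaabbb_eq_of_isSuffix hu hw h]
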